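/- Let 0 < s < 1, 2 ≤ p with sp < n, and let p*_s = np/(n−sp). Let R > 0 and Q = B_R × (T−R^{sp}, T]. Suppose w ∈ L^{p*_s,p}(Q) ∩ L^{p,∞}(Q), and let q, r ≥ 1 satisfy 1 − 1/r − n/(spq) ≥ 0. Then w ∈ L^{pq′, pr′}(Q) and ‖w‖_{L^{pq′,pr′}(Q)}^p ≤ R^{sp(1 − 1/r − n/(spq))} · ( ‖w‖_{L^{p,∞}(Q)}^p + ‖w‖_{L^{p*_s,p}(Q)}^p ). -/

import Mathlib

open MeasureTheory Metric

/-- Mixed space-time norm `‖u‖_{L^{q,r}} = (∫_J (∫_Ω |u|^q dx)^{r/q} dt)^{1/r}`. -/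
noncomputable def mixedNorm (n : ℕ) (q r : ℝ) (Ω : Set (EuclideanSpace ℝ (Fin n)))
    (J : Set ℝ) (u : EuclideanSpace ℝ (Fin n) → ℝ → ℝ) : ℝ :=
  (∫ t in J, (∫ x in Ω, |u x t| ^ q) ^ (r / q)) ^ (1 / r)

/-- Membership in the mixed space `L^{q,r}(Ω×J)`. -/
def MemMixed (n : ℕ) (q r : ℝ) (Ω : Set (EuclideanSpace ℝ (Fin n)))
    (J : Set ℝ) (u : EuclideanSpace ℝ (Fin n) → ℝ → ℝ) : Prop :=
  (∀ t ∈ J, IntegrableOn (fun x => |u x t| ^ q) Ω) ∧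
  IntegrableOn (fun t => (∫ x in Ω, |u x t| ^ q) ^ (r / q)) J

/-- The `L^{q,∞}` norm: supremum in time of the spatial `L^q` norm. -/
noncomputable def timeSupNorm (n : ℕ) (q : ℝ) (Ω : Set (EuclideanSpace ℝ (Fin n)))
    (J : Set ℝ) (u : EuclideanSpace ℝ (Fin n) → ℝ → ℝ) : ℝ :=
  ⨆ t ∈ J, (∫ x in Ω, |u x t| ^ q) ^ (1 / q)

/-- Membership in `L^{q,∞}(Ω×J)`. -/
def MemTimeSup (n : ℕ) (q : ℝ) (Ω : Set (EuclideanSpace ℝ (Fin n)))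
    (J : Set ℝ) (u : EuclideanSpace ℝ (Fin n) → ℝ → ℝ) : Prop :=
  (∀ t ∈ J, IntegrableOn (fun x => |u x t| ^ q) Ω) ∧
  BddAbove ((fun t => (∫ x in Ω, |u x t| ^ q) ^ (1 / q)) '' J)

/-!
With `θ = n / (s p q)` one has `1 / (p q') = (1 - θ) / p + θ / p*_s`. On each time slice, Hölder's
inequality in space (log-convexity of `c ↦ ∫ |w| ^ c`) bounds the `L^{pq'}` norm by
`‖w‖_{L^p}^{1-θ} ‖w‖_{L^{p*_s}}^θ`, and `‖w‖_{L^p} ≤ ‖w‖_{L^{p,∞}}`. After raising to the power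
`p r'` and integrating in time, the `L^{p*_s}` factor appears with exponent `θ r' ≤ 1` relative to
`p`, so Hölder's inequality in time on an interval of length `R^{sp}` produces the factor
`R^{sp(1 - 1/r - θ)}`. Young's inequality `a^{1-θ} b^θ ≤ a + b` concludes.
-/

open Set

namespace Real

theorem rpow_le_rpow_add_rpow {x a b c : ℝ} (hx : 0 ≤ x) (ha : 0 ≤ a) (hac : a ≤ c)
    (hcb : c ≤ b) : x ^ c ≤ x ^ a + x ^ b := by
  rcases le_total x 1 with hx1 | hx1
  · linarith [rpow_le_rpow_of_exponent_ge' hx hx1 ha hac, rpow_nonneg hx b]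
  · linarith [rpow_le_rpow_of_exponent_le hx1 hcb, rpow_nonneg hx a]

theorem rpow_one_sub_mul_rpow_le_add {x y θ : ℝ} (hx : 0 ≤ x) (hy : 0 ≤ y) (hθ0 : 0 ≤ θ)
    (hθ1 : θ ≤ 1) : x ^ (1 - θ) * y ^ θ ≤ x + y := by
  have := geom_mean_le_arith_mean2_weighted (sub_nonneg.2 hθ1) hθ0 hx hy (by ring)
  nlinarith [mul_nonneg hθ0 hx, mul_nonneg (sub_nonneg.2 hθ1) hy]

theorem mem_Icc_of_one_div_eq_convex_comb {p q c θ : ℝ} (hp : 0 < p) (hpq : p ≤ q)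
    (hθ0 : 0 ≤ θ) (hθ1 : θ ≤ 1) (hc : 1 / c = (1 - θ) / p + θ / q) : c ∈ Set.Icc p q := by
  have hq : 0 < q := hp.trans_le hpq
  have hpq' : 1 / q ≤ 1 / p := one_div_le_one_div_of_le hp hpq
  have hc_le : 1 / c ≤ 1 / p := by
    have : (1 - θ) / p + θ / p = 1 / p := by ring
    linarith [div_le_div_of_nonneg_left hθ0 hp hpq]
  have hc_ge : 1 / q ≤ 1 / c := by
    have : (1 - θ) / q + θ / q = 1 / q := by ring
    linarith [div_le_div_of_nonneg_left (sub_nonneg.2 hθ1) hp hpq]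
  have hc0 : 0 < c := one_div_pos.1 ((one_div_pos.2 hq).trans_le hc_ge)
  exact ⟨(one_div_le_one_div hc0 hp).1 hc_le, (one_div_le_one_div hq hc0).1 hc_ge⟩

theorem one_div_mul_conjExponent_eq_interpolation {n s p q : ℝ} (hn : n ≠ 0) (hs : s ≠ 0)
    (hp : p ≠ 0) (hq : q ≠ 0) :
    1 / (p * (q / (q - 1))) =
      (1 - n / (s * p * q)) / p + n / (s * p * q) / (n * p / (n - s * p)) := by
  field_simp; ring

end Real

section Interpolation

variable {α : Type*} [MeasurableSpace α] {μ : Measure α} {f : α → ℝ}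

theorem integrable_rpow_of_le_of_le {a b c : ℝ} (hf : AEMeasurable f μ) (hf0 : ∀ x, 0 ≤ f x)
    (ha : 0 ≤ a) (hac : a ≤ c) (hcb : c ≤ b) (hfa : Integrable (fun x => f x ^ a) μ)
    (hfb : Integrable (fun x => f x ^ b) μ) : Integrable (fun x => f x ^ c) μ :=
  (hfa.add hfb).mono' (hf.pow_const c).aestronglyMeasurable <| .of_forall fun x => by
    rw [Real.norm_of_nonneg (Real.rpow_nonneg (hf0 x) c)]
    exact Real.rpow_le_rpow_add_rpow (hf0 x) ha hac hcb

theorem MeasureTheory.Integrable.rpow_of_le_one [IsFiniteMeasure μ] {E : ℝ}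
    (hf : Integrable f μ) (hf0 : ∀ x, 0 ≤ f x) (hE0 : 0 ≤ E) (hE1 : E ≤ 1) :
    Integrable (fun x => f x ^ E) μ :=
  integrable_rpow_of_le_of_le hf.aemeasurable hf0 le_rfl hE0 hE1 (by simp)
    (by simpa only [Real.rpow_one] using hf)

theorem memLp_rpow_div_of_integrable_rpow {a d : ℝ} (hf0 : ∀ x, 0 ≤ f x) (hd : 0 < d)
    (hfa : Integrable (fun x => f x ^ a) μ) :
    MemLp (fun x => f x ^ (a / d)) (ENNReal.ofReal d) μ := by
  have h := (memLp_one_iff_integrable.2 hfa).norm_rpow_div (ENNReal.ofReal d)⁻¹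
  rw [one_div, inv_inv] at h
  refine h.ae_eq (.of_forall fun x => ?_)
  rw [ENNReal.toReal_inv, ENNReal.toReal_ofReal hd.le,
    Real.norm_of_nonneg (Real.rpow_nonneg (hf0 x) a), ← Real.rpow_mul (hf0 x), ← div_eq_mul_inv]

-- Log-convexity of `c ↦ ∫ f ^ c`: Hölder's inequality with exponents `1 / u` and `1 / v`.
theorem integral_rpow_convex_comb_le {a b u v : ℝ} (hf0 : ∀ x, 0 ≤ f x) (ha : 0 ≤ a)
    (hb : 0 ≤ b) (hu : 0 ≤ u) (hv : 0 ≤ v) (huv : u + v = 1)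
    (hfa : Integrable (fun x => f x ^ a) μ) (hfb : Integrable (fun x => f x ^ b) μ) :
    ∫ x, f x ^ (u * a + v * b) ∂μ ≤ (∫ x, f x ^ a ∂μ) ^ u * (∫ x, f x ^ b ∂μ) ^ v := by
  rcases hu.eq_or_lt with rfl | hu
  · obtain rfl : v = 1 := by linarith
    simp
  rcases hv.eq_or_lt with rfl | hv
  · obtain rfl : u = 1 := by linarith
    simp
  have hconj : (1 / u).HolderConjugate (1 / v) :=
    ⟨by simp [huv], one_div_pos.2 hu, one_div_pos.2 hv⟩
  have key := integral_mul_le_Lp_mul_Lq_of_nonneg hconj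
    (.of_forall fun x => Real.rpow_nonneg (hf0 x) _)
    (.of_forall fun x => Real.rpow_nonneg (hf0 x) _)
    (memLp_rpow_div_of_integrable_rpow hf0 (one_div_pos.2 hu) hfa)
    (memLp_rpow_div_of_integrable_rpow hf0 (one_div_pos.2 hv) hfb)
  have hpow : ∀ (c d : ℝ) x, 0 < d → (f x ^ (c / (1 / d))) ^ (1 / d) = f x ^ c :=
    fun c d x hd => by rw [← Real.rpow_mul (hf0 x), div_mul_cancel₀ _ (one_div_pos.2 hd).ne']
  simp only [hpow _ _ _ hu, hpow _ _ _ hv, one_div_one_div] at key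
  refine le_of_eq_of_le (integral_congr_ae (.of_forall fun x => ?_)) key
  rw [div_div_eq_mul_div, div_div_eq_mul_div, div_one, div_one,
    ← Real.rpow_add_of_nonneg (hf0 x) (by positivity) (by positivity), mul_comm a, mul_comm b]

theorem integral_rpow_le_mul_measureReal_rpow [IsFiniteMeasure μ] {E : ℝ} (hf : Integrable f μ)
    (hf0 : ∀ x, 0 ≤ f x) (hE0 : 0 ≤ E) (hE1 : E ≤ 1) :
    ∫ x, f x ^ E ∂μ ≤ (∫ x, f x ∂μ) ^ E * μ.real univ ^ (1 - E) := by
  have h := integral_rpow_convex_comb_le (a := 1) (b := 0) hf0 zero_le_one le_rfl hE0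
    (sub_nonneg.2 hE1) (by ring) (by simpa only [Real.rpow_one] using hf) (by simp)
  simpa only [mul_one, mul_zero, add_zero, Real.rpow_one, Real.rpow_zero, integral_const,
    smul_eq_mul] using h

theorem integral_rpow_le_of_one_div_eq {p q c θ : ℝ} (hf0 : ∀ x, 0 ≤ f x) (hp : 0 < p)
    (hpq : p ≤ q) (hθ0 : 0 ≤ θ) (hθ1 : θ ≤ 1) (hc : 1 / c = (1 - θ) / p + θ / q)
    (hfp : Integrable (fun x => f x ^ p) μ) (hfq : Integrable (fun x => f x ^ q) μ) :
    ∫ x, f x ^ c ∂μ ≤ (∫ x, f x ^ p ∂μ) ^ ((1 - θ) * c / p) * (∫ x, f x ^ q ∂μ) ^ (θ * c / q) := by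
  have hq : 0 < q := hp.trans_le hpq
  have hc0 : 0 < c := hp.trans_le (Real.mem_Icc_of_one_div_eq_convex_comb hp hpq hθ0 hθ1 hc).1
  have hsum : (1 - θ) * c / p + θ * c / q = 1 := by
    rw [mul_div_right_comm, mul_div_right_comm θ, ← add_mul, ← hc, one_div_mul_cancel hc0.ne']
  have hexp : (1 - θ) * c / p * p + θ * c / q * q = c := by
    rw [div_mul_cancel₀ _ hp.ne', div_mul_cancel₀ _ hq.ne']; ring
  have h := integral_rpow_convex_comb_le hf0 hp.le hq.le
    (by have := sub_nonneg.2 hθ1; positivity) (by positivity) hsum hfp hfq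
  rwa [hexp] at h

end Interpolation

section MixedNorm

variable {n : ℕ} {Ω : Set (EuclideanSpace ℝ (Fin n))} {J : Set ℝ}
  {w : EuclideanSpace ℝ (Fin n) → ℝ → ℝ}

theorem mixedNorm_rpow (q r c : ℝ) :
    mixedNorm n q r Ω J w ^ c = (∫ t in J, (∫ x in Ω, |w x t| ^ q) ^ (r / q)) ^ (c / r) := by
  rw [mixedNorm, ← Real.rpow_mul (integral_nonneg fun t => by positivity), one_div_mul_eq_div]

theorem mixedNorm_nonneg (q r : ℝ) : 0 ≤ mixedNorm n q r Ω J w :=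
  Real.rpow_nonneg (integral_nonneg fun t => by positivity) _

theorem timeSupNorm_nonneg (q : ℝ) : 0 ≤ timeSupNorm n q Ω J w :=
  Real.iSup_nonneg fun _ => Real.iSup_nonneg fun _ => by positivity

theorem MemTimeSup.integral_le_timeSupNorm_rpow {p t : ℝ} (hw : MemTimeSup n p Ω J w)
    (hp : 0 < p) (ht : t ∈ J) : ∫ x in Ω, |w x t| ^ p ≤ timeSupNorm n p Ω J w ^ p := by
  have hbdd : BddAbove (⋃ t, range fun (_ : t ∈ J) => (∫ x in Ω, |w x t| ^ p) ^ (1 / p)) := by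
    convert hw.2 using 1
    ext; simp [eq_comm]
  have h := Real.rpow_le_rpow (by positivity) (le_ciSup₂ hbdd t ht) hp.le
  rwa [← Real.rpow_mul (integral_nonneg fun x => by positivity), one_div_mul_cancel hp.ne',
    Real.rpow_one] at h

theorem measurable_integral_abs_rpow (hw : Measurable (Function.uncurry w)) (c : ℝ) :
    Measurable fun t => ∫ x in Ω, |w x t| ^ c :=
  ((hw.abs.pow_const c).stronglyMeasurable.integral_prod_left' (μ := volume.restrict Ω)).measurable

variable {p ps A B θ : ℝ}

theorem integral_abs_rpow_rpow_le_of_interpolation {t : ℝ} (hp : 0 < p) (hpps : p ≤ ps)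
    (hθ0 : 0 ≤ θ) (hθ1 : θ ≤ 1) (hA : 1 / A = (1 - θ) / p + θ / ps) (hB : 0 ≤ B)
    (hS : MemMixed n ps p Ω J w) (hI : MemTimeSup n p Ω J w) (ht : t ∈ J) :
    (∫ x in Ω, |w x t| ^ A) ^ (B / A) ≤
      timeSupNorm n p Ω J w ^ ((1 - θ) * B) *
        ((∫ x in Ω, |w x t| ^ ps) ^ (p / ps)) ^ (θ * B / p) := by
  have hps : 0 < ps := hp.trans_le hpps
  have hA0 : 0 < A :=
    hp.trans_le (Real.mem_Icc_of_one_div_eq_convex_comb hp hpps hθ0 hθ1 hA).1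
  have hθ1' : 0 ≤ 1 - θ := sub_nonneg.2 hθ1
  set S := timeSupNorm n p Ω J w
  set Q := ∫ x in Ω, |w x t| ^ ps
  have hS0 : 0 ≤ S := timeSupNorm_nonneg p
  have hQ0 : 0 ≤ Q := integral_nonneg fun x => by positivity
  have hspatial : ∫ x in Ω, |w x t| ^ A ≤ (S ^ p) ^ ((1 - θ) * A / p) * Q ^ (θ * A / ps) := by
    refine (integral_rpow_le_of_one_div_eq (fun x => abs_nonneg _) hp hpps hθ0 hθ1 hA
      (hI.1 t ht) (hS.1 t ht)).trans ?_
    gcongr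
    exact hI.integral_le_timeSupNorm_rpow hp ht
  calc (∫ x in Ω, |w x t| ^ A) ^ (B / A)
      ≤ ((S ^ p) ^ ((1 - θ) * A / p) * Q ^ (θ * A / ps)) ^ (B / A) := by
        gcongr
    _ = S ^ ((1 - θ) * B) * (Q ^ (p / ps)) ^ (θ * B / p) := by
      rw [Real.mul_rpow (by positivity) (by positivity), ← Real.rpow_mul hS0,
        ← Real.rpow_mul hS0, ← Real.rpow_mul hQ0, ← Real.rpow_mul hQ0]
      congr 2 <;> field_simp

theorem MemMixed.of_interpolation (hw : Measurable (Function.uncurry w)) (hJ : MeasurableSet J)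
    (hJfin : volume J ≠ ⊤) (hp : 0 < p) (hpps : p ≤ ps) (hθ0 : 0 ≤ θ) (hθ1 : θ ≤ 1)
    (hA : 1 / A = (1 - θ) / p + θ / ps) (hB : 0 ≤ B) (hθB : θ * B ≤ p)
    (hS : MemMixed n ps p Ω J w) (hI : MemTimeSup n p Ω J w) : MemMixed n A B Ω J w := by
  have hApps := Real.mem_Icc_of_one_div_eq_convex_comb hp hpps hθ0 hθ1 hA
  have : IsFiniteMeasure (volume.restrict J) := isFiniteMeasure_restrict.2 hJfin
  have hG : IntegrableOn (fun t => ((∫ x in Ω, |w x t| ^ ps) ^ (p / ps)) ^ (θ * B / p)) J :=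
    hS.2.rpow_of_le_one (fun t => by positivity) (div_nonneg (mul_nonneg hθ0 hB) hp.le)
      ((div_le_one hp).2 hθB)
  refine ⟨fun t ht => integrable_rpow_of_le_of_le
    (hw.comp measurable_prodMk_right).abs.aemeasurable (fun x => abs_nonneg _) hp.le hApps.1
    hApps.2 (hI.1 t ht) (hS.1 t ht), ?_⟩
  refine (hG.const_mul (timeSupNorm n p Ω J w ^ ((1 - θ) * B))).mono'
    ((measurable_integral_abs_rpow hw A).pow_const _).aestronglyMeasurable
    ((ae_restrict_iff' hJ).2 (.of_forall fun t ht => ?_))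
  rw [Real.norm_of_nonneg (by positivity)]
  exact integral_abs_rpow_rpow_le_of_interpolation hp hpps hθ0 hθ1 hA hB hS hI ht

theorem mixedNorm_rpow_le_of_interpolation (hJ : MeasurableSet J) (hJfin : volume J ≠ ⊤)
    (hp : 0 < p) (hpps : p ≤ ps) (hθ0 : 0 ≤ θ) (hθ1 : θ ≤ 1)
    (hA : 1 / A = (1 - θ) / p + θ / ps) (hB : 0 < B) (hθB : θ * B ≤ p)
    (hS : MemMixed n ps p Ω J w) (hI : MemTimeSup n p Ω J w) :
    mixedNorm n A B Ω J w ^ p ≤ (timeSupNorm n p Ω J w ^ p) ^ (1 - θ) *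
      (mixedNorm n ps p Ω J w ^ p) ^ θ * volume.real J ^ (p / B - θ) := by
  have : IsFiniteMeasure (volume.restrict J) := isFiniteMeasure_restrict.2 hJfin
  set S := timeSupNorm n p Ω J w
  set G := fun t => (∫ x in Ω, |w x t| ^ ps) ^ (p / ps)
  set E := θ * B / p with hE
  have hS0 : 0 ≤ S := timeSupNorm_nonneg p
  have hG0 : ∀ t, 0 ≤ G t := fun t => by positivity
  have hE0 : 0 ≤ E := div_nonneg (mul_nonneg hθ0 hB.le) hp.le
  have hE1 : E ≤ 1 := (div_le_one hp).2 hθB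
  have hpointwise : ∫ t in J, (∫ x in Ω, |w x t| ^ A) ^ (B / A) ≤
      S ^ ((1 - θ) * B) * ∫ t in J, G t ^ E := by
    rw [← integral_const_mul]
    exact integral_mono_of_nonneg (.of_forall fun t => by positivity)
      ((hS.2.rpow_of_le_one hG0 hE0 hE1).const_mul _) ((ae_restrict_iff' hJ).2 (.of_forall
        fun t ht => integral_abs_rpow_rpow_le_of_interpolation hp hpps hθ0 hθ1 hA hB.le hS hI ht))
  have htime : ∫ t in J, G t ^ E ≤ (∫ t in J, G t) ^ E * volume.real J ^ (1 - E) := by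
    simpa only [measureReal_restrict_apply_univ] using
      integral_rpow_le_mul_measureReal_rpow hS.2 hG0 hE0 hE1
  rw [mixedNorm_rpow, mixedNorm_rpow, div_self hp.ne', Real.rpow_one]
  calc (∫ t in J, (∫ x in Ω, |w x t| ^ A) ^ (B / A)) ^ (p / B)
      ≤ (S ^ ((1 - θ) * B) * ((∫ t in J, G t) ^ E * volume.real J ^ (1 - E))) ^ (p / B) := by
        gcongr
        exact hpointwise.trans (by gcongr)
    _ = (S ^ p) ^ (1 - θ) * (∫ t in J, G t) ^ θ * volume.real J ^ (p / B - θ) := by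
      have hG : 0 ≤ ∫ t in J, G t := integral_nonneg hG0
      rw [Real.mul_rpow (by positivity) (by positivity),
        Real.mul_rpow (by positivity) (by positivity), ← Real.rpow_mul hS0, ← Real.rpow_mul hS0,
        ← Real.rpow_mul hG, ← Real.rpow_mul measureReal_nonneg]
      have hS_exp : (1 - θ) * B * (p / B) = p * (1 - θ) := by field_simp
      have hG_exp : E * (p / B) = θ := by rw [hE]; field_simp
      have hJ_exp : (1 - E) * (p / B) = p / B - θ := by rw [sub_mul, hG_exp, one_mul]
      rw [hS_exp, hG_exp, hJ_exp, mul_assoc]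

end MixedNorm

theorem interpolation_subcritical_general (n : ℕ) (s p q r R T : ℝ)
    (hs0 : 0 < s) (hp : 2 ≤ p) (hspn : s * p < n) (hR : 0 < R)
    (hq : 1 ≤ q) (hr : 1 ≤ r) (hqr : 0 ≤ 1 - 1 / r - n / (s * p * q))
    (w : EuclideanSpace ℝ (Fin n) → ℝ → ℝ)
    (hmeas : Measurable (Function.uncurry w))
    (hmemS : MemMixed n ((n : ℝ) * p / ((n : ℝ) - s * p)) p
      (ball (0 : EuclideanSpace ℝ (Fin n)) R) (Set.Ioc (T - R ^ (s * p)) T) w)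
    (hmemI : MemTimeSup n p (ball (0 : EuclideanSpace ℝ (Fin n)) R)
      (Set.Ioc (T - R ^ (s * p)) T) w) :
    MemMixed n (p * (q / (q - 1))) (p * (r / (r - 1)))
        (ball (0 : EuclideanSpace ℝ (Fin n)) R) (Set.Ioc (T - R ^ (s * p)) T) w ∧
    mixedNorm n (p * (q / (q - 1))) (p * (r / (r - 1)))
        (ball (0 : EuclideanSpace ℝ (Fin n)) R) (Set.Ioc (T - R ^ (s * p)) T) w ^ p
      ≤ R ^ (s * p * (1 - 1 / r - n / (s * p * q))) *
        (timeSupNorm n p (ball (0 : EuclideanSpace ℝ (Fin n)) R)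
            (Set.Ioc (T - R ^ (s * p)) T) w ^ p
          + mixedNorm n ((n : ℝ) * p / ((n : ℝ) - s * p)) p
              (ball (0 : EuclideanSpace ℝ (Fin n)) R)
              (Set.Ioc (T - R ^ (s * p)) T) w ^ p) := by
  set θ : ℝ := n / (s * p * q)
  set J := Set.Ioc (T - R ^ (s * p)) T
  have hp0 : 0 < p := by linarith
  have hsp : 0 < s * p := mul_pos hs0 hp0
  have hn : (0 : ℝ) < n := hsp.trans hspn
  have hθ0 : 0 < θ := by positivity
  have hr0 : 0 < 1 / r := one_div_pos.2 (by linarith)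
  have hθ1 : θ < 1 := by linarith
  have hr1 : 1 < r := (div_lt_one (by linarith)).1 (by linarith)
  have hpps : p ≤ n * p / (n - s * p) := by
    rw [le_div_iff₀ (by linarith)]; nlinarith
  have hA := Real.one_div_mul_conjExponent_eq_interpolation hn.ne' hs0.ne' hp0.ne'
    (by linarith : q ≠ 0)
  have hB : 0 < p * (r / (r - 1)) := by have := sub_pos.2 hr1; positivity
  have hpB : p / (p * (r / (r - 1))) = 1 - 1 / r := by field_simp
  have hθB : θ * (p * (r / (r - 1))) ≤ p := by
    rw [← le_div_iff₀ hB, hpB]; linarith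
  have hJ : volume.real J = R ^ (s * p) := by
    rw [Real.volume_real_Ioc_of_le (by linarith [Real.rpow_nonneg hR.le (s * p)]), sub_sub_cancel]
  refine ⟨MemMixed.of_interpolation hmeas measurableSet_Ioc measure_Ioc_lt_top.ne hp0 hpps
    hθ0.le hθ1.le hA hB.le hθB hmemS hmemI, ?_⟩
  set S := timeSupNorm n p (ball 0 R) J w
  set M := mixedNorm n (n * p / (n - s * p)) p (ball 0 R) J w
  calc _ ≤ (S ^ p) ^ (1 - θ) * (M ^ p) ^ θ * volume.real J ^ (p / (p * (r / (r - 1))) - θ) :=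
        mixedNorm_rpow_le_of_interpolation measurableSet_Ioc measure_Ioc_lt_top.ne hp0
          hpps hθ0.le hθ1.le hA hB hθB hmemS hmemI
    _ = R ^ (s * p * (1 - 1 / r - θ)) * ((S ^ p) ^ (1 - θ) * (M ^ p) ^ θ) := by
      rw [hJ, hpB, Real.rpow_mul hR.le (s * p)]; ring
    _ ≤ _ := by
      gcongr
      exact Real.rpow_one_sub_mul_rpow_le_add (Real.rpow_nonneg (timeSupNorm_nonneg p) p)
        (Real.rpow_nonneg (mixedNorm_nonneg _ p) p) hθ0.le hθ1.le

theorem interpolation_subcritical (n : ℕ) (s p q r R T : ℝ)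
    (hs0 : 0 < s) (hs1 : s < 1) (hp : 2 ≤ p) (hspn : s * p < n) (hR : 0 < R)
    (hq : 1 ≤ q) (hr : 1 ≤ r) (hqr : 0 ≤ 1 - 1 / r - n / (s * p * q))
    (w : EuclideanSpace ℝ (Fin n) → ℝ → ℝ)
    (hmeas : Measurable (Function.uncurry w))
    (hmemS : MemMixed n ((n : ℝ) * p / ((n : ℝ) - s * p)) p
      (ball (0 : EuclideanSpace ℝ (Fin n)) R) (Set.Ioc (T - R ^ (s * p)) T) w)
    (hmemI : MemTimeSup n p (ball (0 : EuclideanSpace ℝ (Fin n)) R)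
      (Set.Ioc (T - R ^ (s * p)) T) w) :
    MemMixed n (p * (q / (q - 1))) (p * (r / (r - 1)))
        (ball (0 : EuclideanSpace ℝ (Fin n)) R) (Set.Ioc (T - R ^ (s * p)) T) w ∧
    mixedNorm n (p * (q / (q - 1))) (p * (r / (r - 1)))
        (ball (0 : EuclideanSpace ℝ (Fin n)) R) (Set.Ioc (T - R ^ (s * p)) T) w ^ p
      ≤ R ^ (s * p * (1 - 1 / r - n / (s * p * q))) *
        (timeSupNorm n p (ball (0 : EuclideanSpace ℝ (Fin n)) R)
            (Set.Ioc (T - R ^ (s * p)) T) w ^ p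
          + mixedNorm n ((n : ℝ) * p / ((n : ℝ) - s * p)) p
              (ball (0 : EuclideanSpace ℝ (Fin n)) R)
              (Set.Ioc (T - R ^ (s * p)) T) w ^ p) :=
  interpolation_subcritical_general n s p q r R T hs0 hp hspn hR hq hr hqr w hmeas hmemS hmemI
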